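/- arXiv:1805.09586 — 4 statements merged into one kernel-verified Lean document; each statement's English description precedes it below -/
import Mathlib

section
/- Let d⁺ = ((d₁⁺,v₁),…,(dₙ⁺,vₙ)) be an outdegree-vertex sequence, let W be a proper subset of V = {v₁,…,vₙ}, and let G_W be an oriented graph on V in which every vertex of W has its prescribed outdegree and every vertex outside W has outdegree 0, such that d⁺ is G_W-normal. Let G be a realization of d⁺ satisfying N⁺_G(v) = N⁺_{G_W}(v) for every v ∈ W, let vᵢ ∈ V \ W with dᵢ⁺ > 0, and suppose v_j ∈ N⁺_G(vᵢ) \ L_{G_W}(vᵢ) and v_k ∈ L_{G_W}(vᵢ) \ N⁺_G(vᵢ) where v_k precedes v_j in the G_W-normal ordering (so in particular d_k⁺ + d⁻_{G_W}(v_k) ≤ d_j⁺ + d⁻_{G_W}(v_j)). Then d⁺ has a realization G′ with N⁺_{G′}(v) = N⁺_{G_W}(v) for every v ∈ W and N⁺_{G′}(vᵢ) = (N⁺_G(vᵢ) \ {v_j}) ∪ {v_k}. -/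
/-- An oriented graph on `Fin m`: no loops and at most one of the two possible
directed edges between any two vertices. -/
def IsOriented {m : ℕ} (R : Fin m → Fin m → Bool) : Prop :=
  ∀ i j, R i j = true → R j i = false

/-- The outdegree of vertex `i` in the directed graph `R`. -/
def outDeg {m : ℕ} (R : Fin m → Fin m → Bool) (i : Fin m) : ℕ :=
  (Finset.univ.filter (fun j => R i j = true)).card

/-- The indegree of vertex `i` in the directed graph `R`. -/
def inDeg {m : ℕ} (R : Fin m → Fin m → Bool) (i : Fin m) : ℕ :=
  (Finset.univ.filter (fun j => R j i = true)).card

/-- The set of out-neighbours of vertex `i` in the directed graph `R`. -/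
def outNbrs {m : ℕ} (R : Fin m → Fin m → Bool) (i : Fin m) : Finset (Fin m) :=
  Finset.univ.filter (fun j => R i j = true)
/-- `R` is a realization of the outdegree-vertex sequence `d`: an oriented graph
in which every vertex `i` has outdegree `d i`. -/
def IsRealization {m : ℕ} (d : Fin m → ℕ) (R : Fin m → Fin m → Bool) : Prop :=
  IsOriented R ∧ ∀ i, outDeg R i = d i

/-- The OVS `d` is `G_W`-normal: the first `|W|` entries of the sequence are exactly
the vertices of `W`, and past `W` the values `d i + d⁻_{G_W}(i)` are sorted, with ties
broken by `d i ≤ d (i+1)`. (Vertices are identified with their position in the sequence.) -/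
def IsGWNormal {m : ℕ} (d : Fin m → ℕ) (W : Finset (Fin m)) (GW : Fin m → Fin m → Bool) : Prop :=
  (∀ i : Fin m, (i : ℕ) < W.card → i ∈ W) ∧
  (∀ i j : Fin m, W.card ≤ (i : ℕ) → (i : ℕ) + 1 = (j : ℕ) →
    (d i + inDeg GW i < d j + inDeg GW j ∨
      (d i + inDeg GW i = d j + inDeg GW j ∧ d i ≤ d j)))

/-- `A` is a possible out-neighbourhood (PON) of `i`: a set of `d i` vertices avoiding
`i` itself and the in-neighbours of `i` in `G_W`. -/
def IsPON {m : ℕ} (d : Fin m → ℕ) (GW : Fin m → Fin m → Bool) (i : Fin m)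
    (A : Finset (Fin m)) : Prop :=
  A.card = d i ∧ ∀ a ∈ A, a ≠ i ∧ GW a i = false

/-- `L` is the leftmost PON of `i`: the PON consisting of the `d i` admissible vertices
occurring earliest in the sequence. -/
def IsLeftmostPON {m : ℕ} (d : Fin m → ℕ) (GW : Fin m → Fin m → Bool) (i : Fin m)
    (L : Finset (Fin m)) : Prop :=
  IsPON d GW i L ∧ ∀ a ∈ L, ∀ b : Fin m, b ≠ i → GW b i = false → b ∉ L → a < b

/-!
If `k ↛ i`, redirecting the edge `i → j` to `i → k` already works. Otherwise `k ∉ W` (as `k` is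
admissible for `i`), hence `j ∉ W` by normality. If some `x` is non-adjacent to `k`, first redirect
`k → i` to `k → x`. If `k` is adjacent to all other vertices, then `d k + d⁻(k) = m - 1`, while
`d j + d⁻(j) ≤ m - 1`; since normality gives `d k + d⁻_{G_W}(k) ≤ d j + d⁻_{G_W}(j)` and `i` is an
in-neighbour of `j` but not of `k`, some in-neighbour `y ∉ W` of `k` is not an in-neighbour of `j`.
If `y = j`, reverse the triangle `i → j → k → i`; if `j → y`, reverse the 4-cycle
`i → j → y → k → i`; otherwise redirect `y → k` to `y → j`, then `k → i` to `k → y`, then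
`i → j` to `i → k`. Each move keeps all outdegrees and touches only vertices outside `W`.
-/

section

variable {m : ℕ} {G : Fin m → Fin m → Bool} {W : Finset (Fin m)} {a b c i j k u v : Fin m}

@[simp]
lemma mem_outNbrs : b ∈ outNbrs G a ↔ G a b = true := by
  simp [outNbrs]

def inNbrs (G : Fin m → Fin m → Bool) (v : Fin m) : Finset (Fin m) :=
  Finset.univ.filter (fun u => G u v = true)

@[simp]
lemma mem_inNbrs : u ∈ inNbrs G v ↔ G u v = true := by
  simp [inNbrs]

lemma outDeg_eq_card_outNbrs (G : Fin m → Fin m → Bool) (v : Fin m) :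
    outDeg G v = (outNbrs G v).card := rfl

lemma inDeg_eq_card_inNbrs (G : Fin m → Fin m → Bool) (v : Fin m) :
    inDeg G v = (inNbrs G v).card := rfl

lemma apply_eq_of_outNbrs_eq {H : Fin m → Fin m → Bool} (h : outNbrs G v = outNbrs H v)
    (u : Fin m) : G v u = H v u := by
  have := Finset.ext_iff.1 h u
  simp only [mem_outNbrs] at this
  exact Bool.eq_iff_iff.2 this

lemma apply_eq_false_of_outDeg_eq_zero (h : outDeg G v = 0) (u : Fin m) : G v u = false := by
  rw [outDeg_eq_card_outNbrs, Finset.card_eq_zero, Finset.eq_empty_iff_forall_notMem] at h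
  simpa using h u

lemma Finset.card_insert_erase_of_mem_of_notMem {α : Type*} [DecidableEq α] {s : Finset α}
    {b c : α} (hb : b ∈ s) (hc : c ∉ s) :
    (insert c (s.erase b)).card = s.card := by
  rw [card_insert_of_notMem (fun h => hc (mem_of_mem_erase h)), card_erase_add_one hb]

namespace IsOriented

lemma apply_self (hG : IsOriented G) (v : Fin m) : G v v = false := by
  cases h : G v v
  · rfl
  · simpa [h] using hG v v h

lemma outDeg_add_inDeg_lt (hG : IsOriented G) (v : Fin m) : outDeg G v + inDeg G v < m := by
  have hdisj : Disjoint (outNbrs G v) (inNbrs G v) :=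
    Finset.disjoint_left.2 fun u hu hu' => by simp_all [hG v u (mem_outNbrs.1 hu)]
  have hv : v ∉ outNbrs G v ∪ inNbrs G v := by simp [hG.apply_self]
  have := Finset.card_le_univ (insert v (outNbrs G v ∪ inNbrs G v))
  rw [Finset.card_insert_of_notMem hv, Finset.card_union_of_disjoint hdisj] at this
  simpa [outDeg_eq_card_outNbrs, inDeg_eq_card_inNbrs] using this

end IsOriented

lemma card_le_outDeg_add_inDeg_add_one (hv : ∀ u ≠ v, G v u = true ∨ G u v = true) :
    m ≤ outDeg G v + inDeg G v + 1 := by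
  have hcover : (Finset.univ : Finset (Fin m)) ⊆ insert v (outNbrs G v ∪ inNbrs G v) := by
    intro u _
    rcases eq_or_ne u v with rfl | hu
    · simp
    · simpa [hu] using hv u hu
  calc m = (Finset.univ : Finset (Fin m)).card := by simp
    _ ≤ _ := Finset.card_le_card hcover
    _ ≤ _ := Finset.card_insert_le _ _
    _ ≤ _ := by grw [Finset.card_union_le]; rfl

def redirect (G : Fin m → Fin m → Bool) (a b c : Fin m) : Fin m → Fin m → Bool :=
  Function.update G a fun u => decide (u ∈ insert c ((outNbrs G a).erase b))

lemma redirect_apply (G : Fin m → Fin m → Bool) (a b c u v : Fin m) :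
    redirect G a b c u v = if u = a then decide (v ∈ insert c ((outNbrs G a).erase b))
      else G u v := by
  by_cases h : u = a
  · subst h; simp [redirect]
  · simp [redirect, h]

lemma outNbrs_redirect_self : outNbrs (redirect G a b c) a = insert c ((outNbrs G a).erase b) := by
  ext; simp [redirect_apply]

lemma outNbrs_redirect_of_ne (h : v ≠ a) : outNbrs (redirect G a b c) v = outNbrs G v := by
  ext; simp [redirect_apply, h]

lemma IsOriented.redirect (hG : IsOriented G) (hca : c ≠ a) (hac : G a c = false)
    (hca' : G c a = false) : IsOriented (redirect G a b c) := by
  intro u v huv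
  rw [redirect_apply] at huv ⊢
  split_ifs at huv ⊢ with hv hu hu
  · subst_vars; simp_all [hG.apply_self]
  · subst hv
    have huc : u ≠ c := by rintro rfl; simp_all
    simp [huc, hG _ _ huv]
  · subst hu
    simp only [decide_eq_true_eq, Finset.mem_insert, Finset.mem_erase, mem_outNbrs] at huv
    rcases huv with rfl | ⟨-, huv⟩
    exacts [hca', hG _ _ huv]
  · exact hG _ _ huv

lemma outDeg_redirect (hb : G a b = true) (hc : G a c = false) :
    outDeg (redirect G a b c) = outDeg G := by
  funext v
  rcases eq_or_ne v a with rfl | hv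
  · rw [outDeg_eq_card_outNbrs, outNbrs_redirect_self,
      Finset.card_insert_erase_of_mem_of_notMem] <;> simp_all [outDeg_eq_card_outNbrs]
  · rw [outDeg_eq_card_outNbrs, outNbrs_redirect_of_ne hv, outDeg_eq_card_outNbrs]

-- Reverses every edge `v → σ v` of `G` with `σ v ≠ v`.
def reverseAlong (G : Fin m → Fin m → Bool) (σ : Equiv.Perm (Fin m)) : Fin m → Fin m → Bool :=
  fun u v => decide ((G u v = true ∧ σ u ≠ v) ∨ (σ v = u ∧ v ≠ u))

section reverseAlong

variable {σ : Equiv.Perm (Fin m)}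

lemma IsOriented.reverseAlong (hG : IsOriented G) (hσ : ∀ v, σ v ≠ v → G v (σ v) = true) :
    IsOriented (reverseAlong G σ) := by
  intro u v huv
  simp only [_root_.reverseAlong, decide_eq_true_eq, decide_eq_false_iff_not] at huv ⊢
  rintro (⟨hvu, hσv⟩ | ⟨rfl, hne⟩)
  · rcases huv with ⟨huv, -⟩ | ⟨rfl, -⟩
    · simp [hG _ _ huv] at hvu
    · exact hσv rfl
  · rcases huv with ⟨-, hσu⟩ | ⟨hσv, -⟩
    · exact hσu rfl
    · have h₁ := hσ u (Ne.symm hne)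
      have h₂ := hσ (σ u) (by rw [hσv]; exact hne)
      rw [hσv] at h₂
      simp [hG _ _ h₁] at h₂

lemma outNbrs_reverseAlong_of_apply_eq (hu : σ u = v) (hv : σ v ≠ v) :
    outNbrs (reverseAlong G σ) v = insert u ((outNbrs G v).erase (σ v)) := by
  have huv : u ≠ v := by rintro rfl; exact hv hu
  ext w
  simp only [mem_outNbrs, _root_.reverseAlong, decide_eq_true_eq, Finset.mem_insert,
    Finset.mem_erase]
  rw [← hu, σ.apply_eq_iff_eq]
  constructor
  · rintro (⟨hw, hne⟩ | ⟨rfl, -⟩)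
    exacts [Or.inr ⟨Ne.symm hne, hw⟩, Or.inl rfl]
  · rintro (rfl | ⟨hne, hw⟩)
    exacts [Or.inr ⟨rfl, hu ▸ huv⟩, Or.inl ⟨hw, Ne.symm hne⟩]

lemma outNbrs_reverseAlong_of_apply_eq_self (hG : IsOriented G) (hv : σ v = v) :
    outNbrs (reverseAlong G σ) v = outNbrs G v := by
  ext w
  simp only [mem_outNbrs, _root_.reverseAlong, decide_eq_true_eq]
  rw [hv, ← hv, σ.apply_eq_iff_eq, hv]
  constructor
  · rintro (⟨hw, -⟩ | ⟨rfl, hne⟩)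
    exacts [hw, absurd rfl hne]
  · intro hw
    exact Or.inl ⟨hw, by rintro rfl; simp [hG.apply_self] at hw⟩

lemma outDeg_reverseAlong (hG : IsOriented G) (hσ : ∀ v, σ v ≠ v → G v (σ v) = true) :
    outDeg (reverseAlong G σ) = outDeg G := by
  funext v
  simp only [outDeg_eq_card_outNbrs]
  by_cases hv : σ v = v
  · rw [outNbrs_reverseAlong_of_apply_eq_self hG hv]
  have hu : σ (σ.symm v) = v := σ.apply_symm_apply v
  have hin : G (σ.symm v) v = true := by
    have hne : σ.symm v ≠ v := fun h => hv ((Equiv.symm_apply_eq σ).1 h).symm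
    have := hσ (σ.symm v) (by rw [hu]; exact hne.symm)
    rwa [hu] at this
  rw [outNbrs_reverseAlong_of_apply_eq hu hv,
    Finset.card_insert_erase_of_mem_of_notMem (by simpa using hσ v hv) (by simp [hG _ _ hin])]

end reverseAlong

def Exchangeable (G : Fin m → Fin m → Bool) (W : Finset (Fin m)) (i j k : Fin m) : Prop :=
  ∃ G', IsOriented G' ∧ outDeg G' = outDeg G ∧ (∀ v ∈ W, outNbrs G' v = outNbrs G v) ∧
    outNbrs G' i = insert k ((outNbrs G i).erase j)

lemma exchangeable_of_not_adj (hG : IsOriented G) (hi : i ∉ W) (hij : G i j = true)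
    (hik : G i k = false) (hki : G k i = false) (hk : k ≠ i) : Exchangeable G W i j k :=
  ⟨redirect G i j k, hG.redirect hk hik hki, outDeg_redirect hij hik,
    fun _ hv => outNbrs_redirect_of_ne (ne_of_mem_of_not_mem hv hi), outNbrs_redirect_self⟩

lemma Exchangeable.of_redirect (h : Exchangeable (redirect G a b c) W i j k) (ha : a ∉ W)
    (hia : i ≠ a) (hab : G a b = true) (hac : G a c = false) : Exchangeable G W i j k := by
  obtain ⟨G', hG', hdeg, hW, hi⟩ := h
  refine ⟨G', hG', hdeg.trans (outDeg_redirect hab hac), fun v hv => ?_, ?_⟩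
  · rw [hW v hv, outNbrs_redirect_of_ne (ne_of_mem_of_not_mem hv ha)]
  · rw [hi, outNbrs_redirect_of_ne hia]

lemma exchangeable_of_reverseAlong {σ : Equiv.Perm (Fin m)} (hG : IsOriented G)
    (hσ : ∀ v, σ v ≠ v → G v (σ v) = true) (hW : ∀ v ∈ W, σ v = v) (hki : σ k = i)
    (hij : σ i = j) (hji : j ≠ i) : Exchangeable G W i j k :=
  ⟨reverseAlong G σ, hG.reverseAlong hσ, outDeg_reverseAlong hG hσ,
    fun v hv => outNbrs_reverseAlong_of_apply_eq_self hG (hW v hv),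
    by rw [outNbrs_reverseAlong_of_apply_eq hki (hij ▸ hji), hij]⟩

lemma exists_mem_inNbrs_sdiff_notMem (hG : IsOriented G)
    (hk : ∀ u ≠ k, G k u = true ∨ G u k = true) (hij : G i j = true) (hik : G i k = false)
    (hi : i ∉ W)
    (hle : outDeg G k + (inNbrs G k ∩ W).card ≤ outDeg G j + (inNbrs G j ∩ W).card) :
    ∃ y ∈ inNbrs G k \ inNbrs G j, y ∉ W := by
  by_contra! hno
  have hsub : insert i (inNbrs G k \ W) ⊆ inNbrs G j \ W := by
    intro u hu
    rcases Finset.mem_insert.1 hu with rfl | hu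
    · simpa [hi] using hij
    · obtain ⟨huk, huW⟩ := Finset.mem_sdiff.1 hu
      by_contra huj
      exact huW (hno u (Finset.mem_sdiff.2 ⟨huk, fun h => huj (Finset.mem_sdiff.2 ⟨h, huW⟩)⟩))
  have hcard := Finset.card_le_card hsub
  rw [Finset.card_insert_of_notMem (by simp [hik])] at hcard
  have hk' := card_le_outDeg_add_inDeg_add_one hk
  have hj' := hG.outDeg_add_inDeg_lt j
  rw [inDeg_eq_card_inNbrs, ← Finset.card_inter_add_card_sdiff _ W] at hk' hj'
  omega

lemma exchangeable_of_adj_of_nonNbr (hG : IsOriented G) (hi : i ∉ W) (hk : k ∉ W)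
    (hij : G i j = true) (hki : G k i = true) {x : Fin m} (hxk : x ≠ k) (hkx : G k x = false)
    (hxk' : G x k = false) : Exchangeable G W i j k := by
  have hik : G i k = false := hG k i hki
  have hik' : i ≠ k := by rintro rfl; simp [hG.apply_self] at hki
  have hxi : x ≠ i := by rintro rfl; simp [hki] at hkx
  refine (exchangeable_of_not_adj (hG.redirect (b := i) hxk hkx hxk') hi ?_ ?_ ?_
    hik'.symm).of_redirect hk hik' hki hkx <;> simp [redirect_apply, hik', hij, hik, hxi.symm]

lemma exchangeable_of_adj_of_inNbr (hG : IsOriented G) (hi : i ∉ W) (hj : j ∉ W) (hk : k ∉ W)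
    (hij : G i j = true) (hki : G k i = true) {y : Fin m} (hyW : y ∉ W) (hyk : G y k = true)
    (hyj : G y j = false) : Exchangeable G W i j k := by
  have hik : G i k = false := hG k i hki
  have hik' : i ≠ k := by rintro rfl; simp [hG.apply_self] at hki
  have hij' : i ≠ j := by rintro rfl; simp [hG.apply_self] at hij
  have hjk' : j ≠ k := by rintro rfl; simp [hij] at hik
  have hyi : y ≠ i := by rintro rfl; simp [hik] at hyk
  have hyk' : y ≠ k := by rintro rfl; simp [hG.apply_self] at hyk
  rcases eq_or_ne y j with rfl | hyj'
  · refine exchangeable_of_reverseAlong (σ := [i, y, k].formPerm) hG (fun v hv => ?_)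
      (fun v hv => List.formPerm_apply_of_notMem ?_) (by simp) ?_ hij'.symm
    · have := List.mem_of_formPerm_apply_ne hv
      simp only [List.mem_cons, List.not_mem_nil, or_false] at this
      rcases this with rfl | rfl | rfl <;>
        simp [Equiv.swap_apply_of_ne_of_ne, hij', hik', hik'.symm, hyk'.symm, hij, hyk, hki]
    · simp only [List.mem_cons, List.not_mem_nil, or_false]
      rintro (rfl | rfl | rfl) <;> contradiction
    · simp [Equiv.swap_apply_of_ne_of_ne, hij', hik']
  by_cases hjy : G j y = true
  · refine exchangeable_of_reverseAlong (σ := [i, j, y, k].formPerm) hG (fun v hv => ?_)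
      (fun v hv => List.formPerm_apply_of_notMem ?_) (by simp) ?_ hij'.symm
    · have := List.mem_of_formPerm_apply_ne hv
      simp only [List.mem_cons, List.not_mem_nil, or_false] at this
      rcases this with rfl | rfl | rfl | rfl <;>
        simp [Equiv.swap_apply_of_ne_of_ne, hij', hik', hjk', hyi, hyj', hik'.symm, hjk'.symm,
          hyi.symm, hyj'.symm, hyk'.symm, hij, hjy, hyk, hki]
    · simp only [List.mem_cons, List.not_mem_nil, or_false]
      rintro (rfl | rfl | rfl | rfl) <;> contradiction
    · simp [Equiv.swap_apply_of_ne_of_ne, hij', hik', hyi.symm]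
  · have hG' := (hG.redirect (b := k) hyj'.symm hyj (by simpa using hjy)).redirect (b := i) hyk'
    refine ((exchangeable_of_not_adj (hG' ?_ ?_) hi ?_ ?_ ?_ hik'.symm).of_redirect hk hik' ?_ ?_
      ).of_redirect hyW hyi.symm hyk hyj <;>
      simp [redirect_apply, hik', hjk'.symm, hyi.symm, hyk'.symm, hij, hyk, hki, hik, hG y k hyk]

lemma exchangeable_of_adj (hG : IsOriented G) (hi : i ∉ W) (hj : j ∉ W) (hk : k ∉ W)
    (hij : G i j = true) (hki : G k i = true)
    (hle : outDeg G k + (inNbrs G k ∩ W).card ≤ outDeg G j + (inNbrs G j ∩ W).card) :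
    Exchangeable G W i j k := by
  by_cases hfree : ∃ x ≠ k, G k x = false ∧ G x k = false
  · obtain ⟨x, hxk, hkx, hxk'⟩ := hfree
    exact exchangeable_of_adj_of_nonNbr hG hi hk hij hki hxk hkx hxk'
  have hkadj : ∀ x ≠ k, G k x = true ∨ G x k = true := by
    intro x hx
    by_contra! h
    exact hfree ⟨x, hx, by simpa using h.1, by simpa using h.2⟩
  obtain ⟨y, hy, hyW⟩ := exists_mem_inNbrs_sdiff_notMem hG hkadj hij (hG k i hki) hi hle
  simp only [Finset.mem_sdiff, mem_inNbrs, Bool.not_eq_true] at hy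
  exact exchangeable_of_adj_of_inNbr hG hi hj hk hij hki hyW hy.1 hy.2

lemma inDeg_eq_card_inNbrs_inter {H : Fin m → Fin m → Bool} (hout : ∀ u ∉ W, ∀ v, H u v = false)
    (hagree : ∀ u ∈ W, ∀ v, G u v = H u v) (v : Fin m) :
    inDeg H v = (inNbrs G v ∩ W).card := by
  rw [inDeg_eq_card_inNbrs]
  congr 1
  ext u
  by_cases hu : u ∈ W <;> simp [hu, hout, hagree]

namespace IsGWNormal

variable {d : Fin m → ℕ} {GW : Fin m → Fin m → Bool}

lemma mem_iff_lt (h : IsGWNormal d W GW) (v : Fin m) : v ∈ W ↔ (v : ℕ) < W.card := by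
  have hsub : Finset.univ.filter (fun v : Fin m => (v : ℕ) < W.card) ⊆ W :=
    fun v hv => h.1 v (by simpa using hv)
  have hcard : W.card ≤ (Finset.univ.filter (fun v : Fin m => (v : ℕ) < W.card)).card := by
    rw [Fin.card_filter_val_lt]
    exact le_min (by simpa using W.card_le_univ) le_rfl
  refine ⟨fun hv => ?_, h.1 v⟩
  rw [← Finset.eq_of_subset_of_card_le hsub hcard] at hv
  simpa using hv

lemma add_inDeg_mono (h : IsGWNormal d W GW) {a b : Fin m} (ha : W.card ≤ (a : ℕ)) (hab : a ≤ b) :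
    d a + inDeg GW a ≤ d b + inDeg GW b := by
  suffices ∀ n, (a : ℕ) ≤ n → ∀ hn : n < m, d a + inDeg GW a ≤ d ⟨n, hn⟩ + inDeg GW ⟨n, hn⟩ from
    this b hab b.isLt
  intro n han
  induction n, han using Nat.le_induction with
  | base => exact fun _ => le_rfl
  | succ n han ih =>
    intro hn
    have hstep := h.2 ⟨n, by omega⟩ ⟨n + 1, hn⟩ (by simp only; omega) rfl
    have := ih (by omega)
    omega

end IsGWNormal

end

theorem ovs_exchange_general {m : ℕ} (d : Fin m → ℕ) (W : Finset (Fin m))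
    (GW : Fin m → Fin m → Bool)
    (hGWdeg : ∀ v : Fin m, outDeg GW v = if v ∈ W then d v else 0)
    (hnormal : IsGWNormal d W GW)
    (i : Fin m) (hi : i ∉ W)
    (L : Finset (Fin m)) (hL : IsLeftmostPON d GW i L)
    (G : Fin m → Fin m → Bool) (hG : IsRealization d G)
    (hagree : ∀ v ∈ W, outNbrs G v = outNbrs GW v)
    (j k : Fin m) (hj : j ∈ outNbrs G i \ L) (hk : k ∈ L \ outNbrs G i) (hkj : k < j) :
    ∃ G' : Fin m → Fin m → Bool, IsRealization d G' ∧
      (∀ v ∈ W, outNbrs G' v = outNbrs GW v) ∧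
      outNbrs G' i = (outNbrs G i \ {j}) ∪ {k} := by
  obtain ⟨hGor, hGdeg⟩ := hG
  obtain ⟨hij, -⟩ := Finset.mem_sdiff.1 hj
  obtain ⟨hkL, hik⟩ := Finset.mem_sdiff.1 hk
  obtain ⟨hk_ne, hGWki⟩ := hL.1.2 k hkL
  rw [mem_outNbrs] at hij hik
  have hGW : ∀ u ∈ W, ∀ v, G u v = GW u v := fun u hu => apply_eq_of_outNbrs_eq (hagree u hu)
  suffices h : Exchangeable G W i j k by
    obtain ⟨G', hG', hdeg, hW, hi'⟩ := h
    refine ⟨G', ⟨hG', fun v => by rw [hdeg, hGdeg]⟩, fun v hv => (hW v hv).trans (hagree v hv), ?_⟩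
    rw [hi', Finset.sdiff_singleton_eq_erase, Finset.union_comm, ← Finset.insert_eq]
  by_cases hki : G k i = true
  · have hkW : k ∉ W := fun hkW => by simp [hGW k hkW, hGWki] at hki
    have hWk : W.card ≤ (k : ℕ) := not_lt.1 ((hnormal.mem_iff_lt k).not.1 hkW)
    have hjW : j ∉ W := by rw [hnormal.mem_iff_lt]; exact not_lt.2 (hWk.trans hkj.le)
    have hin := inDeg_eq_card_inNbrs_inter
      (fun u hu => apply_eq_false_of_outDeg_eq_zero (by simp [hGWdeg, hu])) hGW
    refine exchangeable_of_adj hGor hi hjW hkW hij hki ?_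
    simpa [hGdeg, hin] using hnormal.add_inDeg_mono hWk hkj.le
  · exact exchangeable_of_not_adj hGor hi hij (by simpa using hik) (by simpa using hki) hk_ne

/-- exchange step in the proof of Theorem 3.1. Given a realization `G`
of `d` agreeing with `G_W` on `W`, a vertex `j ∈ N⁺_G(i) \ L` and a vertex
`k ∈ L \ N⁺_G(i)` with `k` preceding `j` in the `G_W`-normal ordering, there is a
realization `G'` agreeing with `G_W` on `W` whose out-neighbourhood at `i` is
`(N⁺_G(i) \ {j}) ∪ {k}`. -/
theorem ovs_exchange {m : ℕ} (d : Fin m → ℕ) (W : Finset (Fin m))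
    (hW : W ⊂ Finset.univ) (GW : Fin m → Fin m → Bool) (hGWor : IsOriented GW)
    (hGWdeg : ∀ v : Fin m, outDeg GW v = if v ∈ W then d v else 0)
    (hnormal : IsGWNormal d W GW)
    (i : Fin m) (hi : i ∉ W) (hdi : 0 < d i)
    (L : Finset (Fin m)) (hL : IsLeftmostPON d GW i L)
    (G : Fin m → Fin m → Bool) (hG : IsRealization d G)
    (hagree : ∀ v ∈ W, outNbrs G v = outNbrs GW v)
    (j k : Fin m) (hj : j ∈ outNbrs G i \ L) (hk : k ∈ L \ outNbrs G i) (hkj : k < j) :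
    ∃ G' : Fin m → Fin m → Bool, IsRealization d G' ∧
      (∀ v ∈ W, outNbrs G' v = outNbrs GW v) ∧
      outNbrs G' i = (outNbrs G i \ {j}) ∪ {k} :=
  ovs_exchange_general d W GW hGWdeg hnormal i hi L hL G hG hagree j k hj hk hkj
end

section
/- For every 2H-tree T_{n₁,…,n_t}, the star chromatic index satisfies χ'_s(T_{n₁,…,n_t}) = t + k*, where k* is the least nonnegative integer k for which there exists an oriented graph on t + k vertices v₁,…,v_{t+k} in which the outdegree of vᵢ equals nᵢ for every 1 ≤ i ≤ t and all the remaining k vertices have outdegree 0. -/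
/-- A star edge coloring of `G` with `k` colors: a proper edge coloring such that
no path or cycle of length four (four edges) is bi-colored. The walk
`a-b-x-y-z` ranges over all paths of length four (`a,b,x,y,z` distinct) and all
cycles of length four (`z = a` and `a,b,x,y` distinct). -/
def IsStarEdgeColoring {V : Type*} (G : SimpleGraph V) {k : ℕ} (c : Sym2 V → Fin k) : Prop :=
  (∀ ⦃u v w : V⦄, G.Adj u v → G.Adj u w → v ≠ w → c s(u, v) ≠ c s(u, w)) ∧
  (∀ a b x y z : V, G.Adj a b → G.Adj b x → G.Adj x y → G.Adj y z →
    a ≠ x → a ≠ y → b ≠ y → b ≠ z → x ≠ z →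
    ¬(c s(a, b) = c s(x, y) ∧ c s(b, x) = c s(y, z)))

/-- The star chromatic index of `G`: the least `k` admitting a star edge coloring. -/
noncomputable def starChromaticIndex {V : Type*} (G : SimpleGraph V) : ℕ :=
  sInf {k : ℕ | ∃ c : Sym2 V → Fin k, IsStarEdgeColoring G c}
/-- The 2H-tree `T_{n₁,…,n_t}`: a root (`none`), its `t` neighbours `uᵢ = some ⟨i, none⟩`,
and for each `i`, `n i` further leaves `some ⟨i, some j⟩` adjacent to `uᵢ`. -/
def twoHTree (t : ℕ) (n : Fin t → ℕ) :
    SimpleGraph (Option (Σ i : Fin t, Option (Fin (n i)))) :=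
  SimpleGraph.fromRel (fun x y =>
    (x = none ∧ ∃ i : Fin t, y = some ⟨i, none⟩) ∨
    (∃ (i : Fin t) (j : Fin (n i)), x = some ⟨i, none⟩ ∧ y = some ⟨i, some j⟩))
/-! A colouring of the 2H-tree is determined by the colours `a i` of the root edges `u uᵢ` and
`p i j` of the pendant edges at `uᵢ`. Every path with four edges has the shape
leaf – `uᵢ` – `u` – `uᵢ'` – leaf, so the colouring is a star edge colouring exactly when `a` and
each `p i` are injective and the arcs `a i → p i j` form an oriented graph on the set of colours
(`p i j = a i` is a loop, `p i j = a i'` together with `p i' j' = a i` a 2-cycle). After relabelling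
the colours so that `a i = i`, star edge colourings with `t + k` colours correspond to oriented
graphs on `t + k` vertices with outdegree `nᵢ` at the `i`-th vertex and `0` at the last `k`. -/

open Function

lemma Nat.sInf_eq_add_sInf_add {p : ℕ → Prop} {t : ℕ} (hle : ∀ m, p m → t ≤ m)
    (hne : ∃ m, p m) : sInf {m | p m} = t + sInf {k | p (t + k)} := by
  have := Nat.sInf_add (p := p) (hle _ (Nat.sInf_mem hne))
  simp_rw [Nat.add_comm _ t] at this
  omega

lemma Fin.natAdd_ne_castAdd {m k : ℕ} (j : Fin k) (i : Fin m) :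
    Fin.natAdd m j ≠ Fin.castAdd k i := by
  simp [Fin.ext_iff]
  omega

namespace TwoHTree

abbrev Vert (t : ℕ) (n : Fin t → ℕ) := Option (Σ i : Fin t, Option (Fin (n i)))

variable {t : ℕ} {n : Fin t → ℕ}

abbrev hub (i : Fin t) : Vert t n := some ⟨i, none⟩

abbrev leaf (i : Fin t) (j : Fin (n i)) : Vert t n := some ⟨i, some j⟩

lemma hub_injective : Injective (hub : Fin t → Vert t n) := by
  intro i i' h
  exact congrArg Sigma.fst (Option.some_injective _ h)

lemma leaf_injective (i : Fin t) : Injective (leaf (n := n) i) := by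
  intro j j' h
  simpa using h

lemma leaf_ne_hub (i i' : Fin t) (j : Fin (n i)) : leaf i j ≠ hub i' := by
  intro h
  obtain ⟨rfl, h⟩ := Sigma.mk.inj (Option.some_injective _ h)
  exact Option.some_ne_none _ (eq_of_heq h)

lemma adj_none_iff {y : Vert t n} : (twoHTree t n).Adj none y ↔ ∃ i, y = hub i := by
  simp +contextual [twoHTree]

lemma adj_hub_iff {i : Fin t} {y : Vert t n} :
    (twoHTree t n).Adj (hub i) y ↔ y = none ∨ ∃ j, y = leaf i j := by
  simp [twoHTree]
  aesop

lemma adj_leaf_iff {i : Fin t} {j : Fin (n i)} {y : Vert t n} :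
    (twoHTree t n).Adj (leaf i j) y ↔ y = hub i := by
  simp +contextual [twoHTree]

lemma adj_none_hub (i : Fin t) : (twoHTree t n).Adj none (hub i) :=
  adj_none_iff.2 ⟨i, rfl⟩

lemma adj_hub_leaf (i : Fin t) (j : Fin (n i)) : (twoHTree t n).Adj (hub i) (leaf i j) :=
  adj_hub_iff.2 (Or.inr ⟨j, rfl⟩)

lemma eq_leaf_hub_root_hub_leaf {a b x y z : Vert t n} (hab : (twoHTree t n).Adj a b)
    (hbx : (twoHTree t n).Adj b x) (hxy : (twoHTree t n).Adj x y)
    (hyz : (twoHTree t n).Adj y z) (hax : a ≠ x) (hby : b ≠ y) (hxz : x ≠ z) :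
    ∃ i j i' j', a = leaf i j ∧ b = hub i ∧ x = none ∧ y = hub i' ∧ z = leaf i' j' := by
  rcases x with _ | ⟨i, _ | j⟩
  · obtain ⟨i, rfl⟩ := adj_none_iff.1 hbx.symm
    obtain ⟨i', rfl⟩ := adj_none_iff.1 hxy
    obtain rfl | ⟨j, rfl⟩ := adj_hub_iff.1 hab.symm
    · exact absurd rfl hax
    obtain rfl | ⟨j', rfl⟩ := adj_hub_iff.1 hyz
    · exact absurd rfl hxz
    exact ⟨i, j, i', j', rfl, rfl, rfl, rfl, rfl⟩
  · obtain rfl | ⟨j, rfl⟩ := adj_hub_iff.1 hbx.symm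
    · obtain rfl | ⟨j', rfl⟩ := adj_hub_iff.1 hxy
      · exact absurd rfl hby
      · exact absurd (adj_leaf_iff.1 hyz).symm hxz
    · exact absurd (adj_leaf_iff.1 hab.symm) hax
  · exact absurd ((adj_leaf_iff.1 hbx.symm).trans (adj_leaf_iff.1 hxy).symm) hby

def IsStarLabelling {C : Type*} (a : Fin t → C) (p : ∀ i, Fin (n i) → C) : Prop :=
  Injective a ∧ (∀ i, Injective (p i)) ∧ ∀ i j i' j', p i j = a i' → p i' j' ≠ a i

lemma IsStarLabelling.comp {C D : Type*} {a : Fin t → C} {p : ∀ i, Fin (n i) → C}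
    (h : IsStarLabelling a p) {f : C → D} (hf : Injective f) :
    IsStarLabelling (f ∘ a) (fun i => f ∘ p i) := by
  obtain ⟨ha, hp, hap⟩ := h
  exact ⟨hf.comp ha, fun i => hf.comp (hp i), fun i j i' j' h h' => hap i j i' j' (hf h) (hf h')⟩

lemma IsStarLabelling.card_le {C : Type*} [Fintype C] {a : Fin t → C} {p : ∀ i, Fin (n i) → C}
    (h : IsStarLabelling a p) : t ≤ Fintype.card C := by
  simpa using Fintype.card_le_of_injective a h.1

lemma isStarEdgeColoring_iff {m : ℕ} (c : Sym2 (Vert t n) → Fin m) :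
    IsStarEdgeColoring (twoHTree t n) c ↔
      IsStarLabelling (fun i => c s(none, hub i)) (fun i j => c s(hub i, leaf i j)) := by
  have hswap : ∀ u v : Vert t n, c s(u, v) = c s(v, u) := fun u v => congrArg c Sym2.eq_swap
  constructor
  · rintro ⟨hproper, hstar⟩
    refine ⟨fun i i' h => ?_, fun i j j' h => ?_, fun i j i' j' h h' => ?_⟩
    · by_contra hne
      exact hproper (adj_none_hub i) (adj_none_hub i') (hub_injective.ne hne) h
    · by_contra hne
      exact hproper (adj_hub_leaf i j) (adj_hub_leaf i j') ((leaf_injective i).ne hne) h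
    · dsimp only at h h'
      by_cases hii : i = i'
      · subst hii
        exact hproper (adj_none_hub i).symm (adj_hub_leaf i j) (by simp)
          (by rw [hswap, h])
      · refine hstar (leaf i j) (hub i) none (hub i') (leaf i' j') (adj_hub_leaf i j).symm
          (adj_none_hub i).symm (adj_none_hub i') (adj_hub_leaf i' j') (by simp)
          (leaf_ne_hub i i' j) (hub_injective.ne hii) (leaf_ne_hub i' i j').symm (by simp) ⟨?_, ?_⟩
        · rw [hswap, h]
        · rw [hswap, h']
  · rintro ⟨ha, hp, hap⟩
    dsimp only at ha hp hap
    refine ⟨fun u v w huv huw hvw h => ?_, ?_⟩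
    · rcases u with _ | ⟨i, _ | j⟩
      · obtain ⟨i, rfl⟩ := adj_none_iff.1 huv
        obtain ⟨i', rfl⟩ := adj_none_iff.1 huw
        exact hvw (congrArg hub (ha h))
      · rcases adj_hub_iff.1 huv with rfl | ⟨j, rfl⟩ <;>
          rcases adj_hub_iff.1 huw with rfl | ⟨j', rfl⟩
        · exact hvw rfl
        · exact hap i j' i j' (h.symm.trans (hswap _ _)) (h.symm.trans (hswap _ _))
        · exact hap i j i j (h.trans (hswap _ _)) (h.trans (hswap _ _))
        · exact hvw (congrArg (leaf i) (hp i h))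
      · exact hvw ((adj_leaf_iff.1 huv).trans (adj_leaf_iff.1 huw).symm)
    · rintro a b x y z hab hbx hxy hyz hax - hby - hxz ⟨h, h'⟩
      obtain ⟨i, j, i', j', rfl, rfl, rfl, rfl, rfl⟩ :=
        eq_leaf_hub_root_hub_leaf hab hbx hxy hyz hax hby hxz
      exact hap i j i' j' ((hswap _ _).trans h) (h'.symm.trans (hswap _ _))

def pairColor {C : Type*} (d : C) (a : Fin t → C) (p : ∀ i, Fin (n i) → C) :
    Vert t n → Vert t n → C
  | none, some ⟨i, none⟩ => a i
  | some ⟨i, none⟩, none => a i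
  | some ⟨_, none⟩, some ⟨i, some j⟩ => p i j
  | some ⟨i, some j⟩, some ⟨_, none⟩ => p i j
  | _, _ => d

def edgeColor {C : Type*} (d : C) (a : Fin t → C) (p : ∀ i, Fin (n i) → C) :
    Sym2 (Vert t n) → C :=
  Sym2.lift ⟨pairColor d a p, fun u v => by
    rcases u with _ | ⟨_, _ | _⟩ <;> rcases v with _ | ⟨_, _ | _⟩ <;> rfl⟩

lemma exists_isStarEdgeColoring_iff (ht : 1 ≤ t) {m : ℕ} :
    (∃ c : Sym2 (Vert t n) → Fin m, IsStarEdgeColoring (twoHTree t n) c) ↔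
      ∃ (a : Fin t → Fin m) (p : ∀ i, Fin (n i) → Fin m), IsStarLabelling a p := by
  constructor
  · rintro ⟨c, hc⟩
    exact ⟨_, _, (isStarEdgeColoring_iff c).1 hc⟩
  · rintro ⟨a, p, h⟩
    exact ⟨edgeColor (a ⟨0, ht⟩) a p, (isStarEdgeColoring_iff _).2 h⟩

lemma mem_outNbrs {m : ℕ} {R : Fin m → Fin m → Bool} {i j : Fin m} :
    j ∈ outNbrs R i ↔ R i j = true := by
  simp [outNbrs]

lemma exists_isStarLabelling_of_isOriented {k : ℕ} {R : Fin (t + k) → Fin (t + k) → Bool}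
    (hR : IsOriented R)
    (hdeg : ∀ i : Fin (t + k), outDeg R i = if h : (i : ℕ) < t then n ⟨i, h⟩ else 0) :
    ∃ p : ∀ i, Fin (n i) → Fin (t + k), IsStarLabelling (Fin.castAdd k) p := by
  have hcard (i : Fin t) : (outNbrs R (Fin.castAdd k i)).card = n i :=
    (by simpa using hdeg (Fin.castAdd k i) : outDeg R (Fin.castAdd k i) = n i)
  let p i j : Fin (t + k) := (outNbrs R (Fin.castAdd k i)).orderIsoOfFin (hcard i) j
  have harc (i : Fin t) (j : Fin (n i)) : R (Fin.castAdd k i) (p i j) = true :=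
    mem_outNbrs.1 ((outNbrs R _).orderIsoOfFin (hcard i) j).2
  refine ⟨p, Fin.castAdd_injective t k, fun i => ?_, fun i j i' j' h h' => ?_⟩
  · exact Subtype.val_injective.comp (OrderIso.injective _)
  · have hii' := harc i j
    have hi'i := harc i' j'
    rw [h] at hii'
    rw [h', hR _ _ hii'] at hi'i
    exact Bool.false_ne_true hi'i

lemma IsStarLabelling.exists_isOriented {k : ℕ} {p : ∀ i, Fin (n i) → Fin (t + k)}
    (h : IsStarLabelling (Fin.castAdd k) p) :
    ∃ R : Fin (t + k) → Fin (t + k) → Bool, IsOriented R ∧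
      ∀ i : Fin (t + k), outDeg R i = if h : (i : ℕ) < t then n ⟨i, h⟩ else 0 := by
  classical
  obtain ⟨-, hp, hap⟩ := h
  let R x y : Bool := decide (∃ i, x = Fin.castAdd k i ∧ y ∈ Set.range (p i))
  refine ⟨R, fun x y hxy => ?_, fun x => ?_⟩
  · simp only [R, decide_eq_true_iff, decide_eq_false_iff_not] at hxy ⊢
    obtain ⟨i, rfl, j, rfl⟩ := hxy
    rintro ⟨i', h, j', h'⟩
    exact hap i j i' j' h h'
  · induction x using Fin.addCases with
    | left i =>
      have : (Finset.univ.filter fun y => R (Fin.castAdd k i) y = true) =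
          Finset.univ.image (p i) := by
        ext y
        simp [R]
      simp [outDeg, this, Finset.card_image_of_injective _ (hp i)]
    | right j =>
      simp [outDeg, R, Fin.natAdd_ne_castAdd]

lemma IsStarLabelling.exists_castAdd {k : ℕ} {a : Fin t → Fin (t + k)}
    {p : ∀ i, Fin (n i) → Fin (t + k)} (h : IsStarLabelling a p) :
    ∃ p' : ∀ i, Fin (n i) → Fin (t + k), IsStarLabelling (Fin.castAdd k) p' := by
  classical
  let e : Set.range a ≃ Set.range (Fin.castAdd k) :=
    (Equiv.ofInjective a h.1).symm.trans (Equiv.ofInjective _ (Fin.castAdd_injective t k))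
  have hσ : e.extendSubtype ∘ a = Fin.castAdd k := by
    funext i
    simp [Equiv.extendSubtype_apply_of_mem e (a i) ⟨i, rfl⟩, e]
  exact ⟨_, hσ ▸ h.comp e.extendSubtype.injective⟩

lemma isStarLabelling_castAdd_sup :
    IsStarLabelling (Fin.castAdd (Finset.univ.sup n))
      (fun i j => Fin.natAdd t (Fin.castLE (Finset.le_sup (Finset.mem_univ i)) j)) :=
  ⟨Fin.castAdd_injective _ _, fun _ => (Fin.natAdd_injective _ _).comp (Fin.castLE_injective _),
    fun _ _ _ _ h => absurd h (Fin.natAdd_ne_castAdd _ _)⟩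

lemma exists_isStarLabelling_iff_exists_isOriented {k : ℕ} :
    (∃ (a : Fin t → Fin (t + k)) (p : ∀ i, Fin (n i) → Fin (t + k)), IsStarLabelling a p) ↔
      ∃ R : Fin (t + k) → Fin (t + k) → Bool, IsOriented R ∧
        ∀ i : Fin (t + k), outDeg R i = if h : (i : ℕ) < t then n ⟨i, h⟩ else 0 := by
  constructor
  · rintro ⟨a, p, h⟩
    obtain ⟨p', h'⟩ := h.exists_castAdd
    exact h'.exists_isOriented
  · rintro ⟨R, hR, hdeg⟩
    obtain ⟨p, h⟩ := exists_isStarLabelling_of_isOriented hR hdeg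
    exact ⟨_, p, h⟩

end TwoHTree

open TwoHTree in
theorem twoHTree_starChromaticIndex_eq_general (t : ℕ) (ht : 1 ≤ t)
    (n : Fin t → ℕ) :
    starChromaticIndex (twoHTree t n) =
      t + sInf {k : ℕ | ∃ R : Fin (t + k) → Fin (t + k) → Bool, IsOriented R ∧
        ∀ i : Fin (t + k), outDeg R i = if h : (i : ℕ) < t then n ⟨i, h⟩ else 0} := by
  rw [starChromaticIndex, Nat.sInf_eq_add_sInf_add (t := t)]
  · congr 2
    ext k
    exact (exists_isStarEdgeColoring_iff ht).trans exists_isStarLabelling_iff_exists_isOriented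
  · rintro m ⟨c, hc⟩
    simpa using ((isStarEdgeColoring_iff c).1 hc).card_le
  · exact ⟨_, (exists_isStarEdgeColoring_iff ht).2 ⟨_, _, isStarLabelling_castAdd_sup⟩⟩

/-- The star chromatic index of the 2H-tree `T_{n₁,…,n_t}` equals
`t + k*`, where `k*` is the least `k` so that some oriented graph on `t + k` vertices has
outdegree `n i` at vertex `i` for `i < t` and outdegree `0` at the remaining `k` vertices. -/
theorem twoHTree_starChromaticIndex_eq (t : ℕ) (ht : 1 ≤ t)
    (n : Fin t → ℕ) (hn : Monotone n) :
    starChromaticIndex (twoHTree t n) =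
      t + sInf {k : ℕ | ∃ R : Fin (t + k) → Fin (t + k) → Bool, IsOriented R ∧
        ∀ i : Fin (t + k), outDeg R i = if h : (i : ℕ) < t then n ⟨i, h⟩ else 0} :=
  twoHTree_starChromaticIndex_eq_general t ht n
end

section
/- Let T_{n₁,…,n_t} be a 2H-tree. If t ≤ 2n_t + 1, then χ'_s(T_{n₁,…,n_t}) ≤ n_t + 1 + ⌊t/2⌋. -/
/-! Colour the root edge `u uᵢ` with `i`. Among the `N = n_t + 1 + ⌊t/2⌋ ≥ t` colours, the leaf
edges at `uᵢ` first take the fresh colours `t, …, N - 1` and then borrow the root colours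
`i + 1, i + 2, … (mod t)`, at most `⌊(t - 1)/2⌋` of them. The only 4-paths of the tree are
leaf–`uᵢ`–`u`–`uᵢ'`–leaf, and such a path is bicoloured only if `uᵢ` borrows `i'` and `uᵢ'`
borrows `i`: then `i' - i` and `i - i'` both lie in `[1, ⌊(t - 1)/2⌋]` modulo `t`, although
their sum is `0` modulo `t`. -/

namespace twoHTree

def leafColor (t N i j : ℕ) : ℕ :=
  if t + j < N then t + j else (i + 1 + (t + j - N)) % t

section leafColor

variable {t m i i' j j' : ℕ}

theorem leafColor_cases (hi : i < t) (hj : j < m) :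
    (leafColor t (m + 1 + t / 2) i j = t + j ∧ t + j < m + 1 + t / 2) ∨
    (m + 1 + t / 2 ≤ t + j ∧ 2 * (1 + (t + j - (m + 1 + t / 2))) < t ∧
      leafColor t (m + 1 + t / 2) i j < t ∧
      (leafColor t (m + 1 + t / 2) i j = i + 1 + (t + j - (m + 1 + t / 2)) ∨
        leafColor t (m + 1 + t / 2) i j + t = i + 1 + (t + j - (m + 1 + t / 2)))) := by
  unfold leafColor
  split_ifs with hfresh
  · exact .inl ⟨rfl, hfresh⟩
  refine .inr ⟨by omega, by omega, Nat.mod_lt _ (by omega), ?_⟩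
  rcases lt_or_ge (i + 1 + (t + j - (m + 1 + t / 2))) t with hs | hs
  · exact .inl (Nat.mod_eq_of_lt hs)
  · rw [Nat.mod_eq_sub_mod hs, Nat.mod_eq_of_lt (by omega)]
    exact .inr (by omega)

theorem leafColor_lt (hi : i < t) (hj : j < m) (htm : t ≤ 2 * m + 1) :
    leafColor t (m + 1 + t / 2) i j < m + 1 + t / 2 := by
  rcases leafColor_cases hi hj with h | h <;> omega

theorem leafColor_ne (hi : i < t) (hj : j < m) :
    leafColor t (m + 1 + t / 2) i j ≠ i := by
  rcases leafColor_cases hi hj with h | h <;> omega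

theorem leafColor_inj (hi : i < t) (hj : j < m) (hj' : j' < m) :
    leafColor t (m + 1 + t / 2) i j = leafColor t (m + 1 + t / 2) i j' ↔ j = j' := by
  refine ⟨fun h => ?_, congrArg _⟩
  rcases leafColor_cases hi hj with h₁ | h₁ <;>
    rcases leafColor_cases hi hj' with h₂ | h₂ <;> omega

theorem not_leafColor_eq_and_leafColor_eq (hi : i < t) (hi' : i' < t) (hj : j < m)
    (hj' : j' < m) :
    ¬(leafColor t (m + 1 + t / 2) i j = i' ∧ leafColor t (m + 1 + t / 2) i' j' = i) := by
  rcases leafColor_cases hi hj with h₁ | h₁ <;>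
    rcases leafColor_cases hi' hj' with h₂ | h₂ <;> omega

end leafColor

variable {t : ℕ} {n : Fin t → ℕ}

abbrev hub (i : Fin t) : Option (Σ i : Fin t, Option (Fin (n i))) := some ⟨i, none⟩

abbrev leaf (i : Fin t) (j : Fin (n i)) : Option (Σ i : Fin t, Option (Fin (n i))) :=
  some ⟨i, some j⟩

theorem adj_none_iff {y : Option (Σ i : Fin t, Option (Fin (n i)))} :
    (twoHTree t n).Adj none y ↔ ∃ i, y = hub i := by
  aesop (add simp [twoHTree, SimpleGraph.fromRel_adj])

theorem adj_hub_iff {i : Fin t} {y : Option (Σ i : Fin t, Option (Fin (n i)))} :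
    (twoHTree t n).Adj (hub i) y ↔ y = none ∨ ∃ j, y = leaf i j := by
  aesop (add simp [twoHTree, SimpleGraph.fromRel_adj])

theorem adj_leaf_iff {i : Fin t} {j : Fin (n i)} {y : Option (Σ i : Fin t, Option (Fin (n i)))} :
    (twoHTree t n).Adj (leaf i j) y ↔ y = hub i := by
  aesop (add simp [twoHTree, SimpleGraph.fromRel_adj])

theorem eq_leaf_hub_root_hub_leaf_of_walk {a b x y z : Option (Σ i : Fin t, Option (Fin (n i)))}
    (hab : (twoHTree t n).Adj a b) (hbx : (twoHTree t n).Adj b x)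
    (hxy : (twoHTree t n).Adj x y) (hyz : (twoHTree t n).Adj y z)
    (hax : a ≠ x) (hby : b ≠ y) (hxz : x ≠ z) :
    ∃ (i i' : Fin t) (j : Fin (n i)) (j' : Fin (n i')), i ≠ i' ∧
      a = leaf i j ∧ b = hub i ∧ x = none ∧ y = hub i' ∧ z = leaf i' j' := by
  rcases x with _ | ⟨i, _ | j⟩
  · obtain ⟨i, rfl⟩ := adj_none_iff.1 hbx.symm
    obtain ⟨i', rfl⟩ := adj_none_iff.1 hxy
    obtain rfl | ⟨j, rfl⟩ := adj_hub_iff.1 hab.symm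
    · exact absurd rfl hax
    obtain rfl | ⟨j', rfl⟩ := adj_hub_iff.1 hyz
    · exact absurd rfl hxz
    exact ⟨i, i', j, j', fun h => hby (h ▸ rfl), rfl, rfl, rfl, rfl, rfl⟩
  · obtain rfl | ⟨j, rfl⟩ := adj_hub_iff.1 hbx.symm
    · obtain rfl | ⟨j, rfl⟩ := adj_hub_iff.1 hxy
      · exact absurd rfl hby
      · exact absurd (adj_leaf_iff.1 hyz).symm hxz
    · exact absurd (adj_leaf_iff.1 hab.symm) hax
  · exact absurd ((adj_leaf_iff.1 hbx.symm).trans (adj_leaf_iff.1 hxy).symm) hby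

theorem isStarEdgeColoring_of {k : ℕ}
    (c : Sym2 (Option (Σ i : Fin t, Option (Fin (n i)))) → Fin k)
    (hroot : ∀ i i' : Fin t, i ≠ i' → c s(none, hub i) ≠ c s(none, hub i'))
    (hleaf : ∀ i (j j' : Fin (n i)), j ≠ j' → c s(hub i, leaf i j) ≠ c s(hub i, leaf i j'))
    (hleaf_root : ∀ i j, c s(hub i, leaf i j) ≠ c s(none, hub i))
    (hpair : ∀ i i' j j', i ≠ i' →
      ¬(c s(hub i, leaf i j) = c s(none, hub i') ∧ c s(hub i', leaf i' j') = c s(none, hub i))) :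
    IsStarEdgeColoring (twoHTree t n) c := by
  refine ⟨fun u v w huv huw hvw => ?_, fun a b x y z hab hbx hxy hyz hax _ hby _ hxz => ?_⟩
  · rcases u with _ | ⟨i, _ | j⟩
    · obtain ⟨i, rfl⟩ := adj_none_iff.1 huv
      obtain ⟨i', rfl⟩ := adj_none_iff.1 huw
      exact hroot i i' fun h => hvw (h ▸ rfl)
    · obtain rfl | ⟨j, rfl⟩ := adj_hub_iff.1 huv <;>
        obtain rfl | ⟨j', rfl⟩ := adj_hub_iff.1 huw
      · exact absurd rfl hvw
      · rw [Sym2.eq_swap]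
        exact (hleaf_root i j').symm
      · rw [Sym2.eq_swap (b := none)]
        exact hleaf_root i j
      · exact hleaf i j j' fun h => hvw (h ▸ rfl)
    · exact absurd ((adj_leaf_iff.1 huv).trans (adj_leaf_iff.1 huw).symm) hvw
  · obtain ⟨i, i', j, j', hii', rfl, rfl, rfl, rfl, rfl⟩ :=
      eq_leaf_hub_root_hub_leaf_of_walk hab hbx hxy hyz hax hby hxz
    rw [Sym2.eq_swap (a := leaf i j), Sym2.eq_swap (a := hub i) (b := none)]
    exact fun ⟨h₁, h₂⟩ => hpair i i' j j' hii' ⟨h₁, h₂.symm⟩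

def pairColor (N : ℕ) :
    Option (Σ i : Fin t, Option (Fin (n i))) → Option (Σ i : Fin t, Option (Fin (n i))) → ℕ
  | none, some ⟨i, _⟩ | some ⟨i, _⟩, none => i
  | some ⟨_, none⟩, some ⟨i, some j⟩ | some ⟨i, some j⟩, some ⟨_, none⟩ => leafColor t N i j
  | _, _ => 0

theorem pairColor_comm (N : ℕ) (x y : Option (Σ i : Fin t, Option (Fin (n i)))) :
    pairColor N x y = pairColor N y x := by
  rcases x with _ | ⟨i, _ | j⟩ <;> rcases y with _ | ⟨i', _ | j'⟩ <;> rfl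

def edgeColor (N : ℕ) : Sym2 (Option (Σ i : Fin t, Option (Fin (n i)))) → ℕ :=
  Sym2.lift ⟨pairColor N, pairColor_comm N⟩

theorem edgeColor_lt {m : ℕ} (hm : ∀ i, n i ≤ m) (htm : t ≤ 2 * m + 1)
    (e : Sym2 (Option (Σ i : Fin t, Option (Fin (n i))))) :
    edgeColor (m + 1 + t / 2) e < m + 1 + t / 2 := by
  induction e using Sym2.ind with | h x y => ?_
  rcases x with _ | ⟨i, _ | j⟩ <;> rcases y with _ | ⟨i', _ | j'⟩ <;>
    simp only [edgeColor, Sym2.lift_mk, pairColor]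
  all_goals first
    | omega
    | exact leafColor_lt i.2 (j.2.trans_le (hm i)) htm
    | exact leafColor_lt i'.2 (j'.2.trans_le (hm i')) htm

theorem exists_isStarEdgeColoring {m : ℕ} (hm : ∀ i, n i ≤ m) (htm : t ≤ 2 * m + 1) :
    ∃ c : Sym2 (Option (Σ i : Fin t, Option (Fin (n i)))) → Fin (m + 1 + t / 2),
      IsStarEdgeColoring (twoHTree t n) c := by
  have hj (i : Fin t) (j : Fin (n i)) : j.1 < m := j.2.trans_le (hm i)
  refine ⟨fun e => ⟨edgeColor _ e, edgeColor_lt hm htm e⟩,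
    isStarEdgeColoring_of _ ?_ ?_ ?_ ?_⟩ <;>
    simp only [ne_eq, Fin.mk.injEq, edgeColor, Sym2.lift_mk, pairColor]
  · exact fun i i' hii' h => hii' (Fin.ext h)
  · exact fun i j j' hjj' h => hjj' (Fin.ext ((leafColor_inj i.2 (hj i j) (hj i j')).1 h))
  · exact fun i j => leafColor_ne i.2 (hj i j)
  · exact fun i i' j j' _ => not_leafColor_eq_and_leafColor_eq i.2 i'.2 (hj i j) (hj i' j')

end twoHTree

/-- Theorem 6.3, first upper bound. For the 2H-tree `T_{n₁,…,n_t}`,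
if `t ≤ 2·n_t + 1` then `χ'_s(T_{n₁,…,n_t}) ≤ n_t + 1 + ⌊t/2⌋`. -/
theorem twoHTree_star_upper_bound_small_t (t : ℕ) (ht : 1 ≤ t) (n : Fin t → ℕ)
    (hn : Monotone n) (h : t ≤ 2 * n ⟨t - 1, by omega⟩ + 1) :
    starChromaticIndex (twoHTree t n) ≤ n ⟨t - 1, by omega⟩ + 1 + t / 2 :=
  Nat.sInf_le (twoHTree.exists_isStarEdgeColoring
    (fun i => hn (Fin.le_iff_val_le_val.2 (Nat.le_sub_one_of_lt i.2))) h)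
end

section
/- Let T = T_{n₁,…,n_t} be a 2H-tree with t ≥ 2 in which n₁ = … = n_{t−2} = 0, and let Δ be the maximum degree of T (so Δ = max(t, n_t + 1)). Then Δ ≤ χ'_s(T) ≤ Δ + 1. -/
/-!
Every proper edge colouring uses at least `Δ` colours: the `t` spokes at the root, and the
`n_{t-1} + 1` edges at the last spoke, pairwise need distinct colours. Conversely, colour the
spoke `u uᵢ` with `i` and the leaf edges at `uᵢ` with `0, 1, …, t - 3, t, t + 1, …`, skipping
`t - 2` and `t - 1`. Only the spokes `u_{t-2}` and `u_{t-1}` carry leaves, so this is proper,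
and the only paths with four edges, `leaf – uᵢ – u – u_k – leaf`, would need the leaf colour
at `uᵢ` to equal the spoke colour `k ∈ {t - 2, t - 1}`. At most `Δ + 1` colours are used.
-/

section StarEdgeColoring

variable {V : Type*} {G : SimpleGraph V} {k : ℕ} {c : Sym2 V → Fin k}

theorem IsStarEdgeColoring.card_le_of_injective (hc : IsStarEdgeColoring G c) {ι : Type*}
    [Fintype ι] (u : V) {f : ι → V} (hf : Function.Injective f) (hadj : ∀ i, G.Adj u (f i)) :
    Fintype.card ι ≤ k := by
  have hinj : Function.Injective fun i => c s(u, f i) := fun i j hij => by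
    by_contra hne
    exact hc.1 (hadj i) (hadj j) (hf.ne hne) hij
  simpa using Fintype.card_le_of_injective _ hinj

theorem IsStarEdgeColoring.starChromaticIndex_le (hc : IsStarEdgeColoring G c) :
    starChromaticIndex G ≤ k :=
  Nat.sInf_le ⟨c, hc⟩

theorem IsStarEdgeColoring.exists_starChromaticIndex (hc : IsStarEdgeColoring G c) :
    ∃ c' : Sym2 V → Fin (starChromaticIndex G), IsStarEdgeColoring G c' :=
  Nat.sInf_mem (s := {k | ∃ c : Sym2 V → Fin k, IsStarEdgeColoring G c}) ⟨k, c, hc⟩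

end StarEdgeColoring

abbrev TwoHTreeVertex (t : ℕ) (n : Fin t → ℕ) : Type := Option (Σ i : Fin t, Option (Fin (n i)))

section TwoHTree

variable {t : ℕ} {n : Fin t → ℕ}

@[simp]
theorem twoHTree_adj_none_iff {y : TwoHTreeVertex t n} :
    (twoHTree t n).Adj none y ↔ ∃ i, y = some ⟨i, none⟩ := by
  simp only [twoHTree, SimpleGraph.fromRel_adj]; aesop

@[simp]
theorem twoHTree_adj_spoke_iff {i : Fin t} {y : TwoHTreeVertex t n} :
    (twoHTree t n).Adj (some ⟨i, none⟩) y ↔ y = none ∨ ∃ j, y = some ⟨i, some j⟩ := by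
  simp only [twoHTree, SimpleGraph.fromRel_adj]; aesop

@[simp]
theorem twoHTree_adj_leaf_iff {i : Fin t} {j : Fin (n i)} {y : TwoHTreeVertex t n} :
    (twoHTree t n).Adj (some ⟨i, some j⟩) y ↔ y = some ⟨i, none⟩ := by
  simp only [twoHTree, SimpleGraph.fromRel_adj]; aesop

theorem twoHTree_path_four {a b x y z : TwoHTreeVertex t n}
    (hab : (twoHTree t n).Adj a b) (hbx : (twoHTree t n).Adj b x) (hxy : (twoHTree t n).Adj x y)
    (hyz : (twoHTree t n).Adj y z) (hax : a ≠ x) (hby : b ≠ y) (hxz : x ≠ z) :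
    ∃ (i k : Fin t) (j : Fin (n i)) (l : Fin (n k)), a = some ⟨i, some j⟩ ∧
      b = some ⟨i, none⟩ ∧ x = none ∧ y = some ⟨k, none⟩ ∧ z = some ⟨k, some l⟩ := by
  rcases x with _ | ⟨i, _ | j⟩
  · obtain ⟨i, rfl⟩ := twoHTree_adj_none_iff.1 hbx.symm
    obtain ⟨k, rfl⟩ := twoHTree_adj_none_iff.1 hxy
    obtain rfl | ⟨j, rfl⟩ := twoHTree_adj_spoke_iff.1 hab.symm
    · exact absurd rfl hax
    obtain rfl | ⟨l, rfl⟩ := twoHTree_adj_spoke_iff.1 hyz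
    · exact absurd rfl hxz
    exact ⟨i, k, j, l, rfl, rfl, rfl, rfl, rfl⟩
  · -- the leaf neighbours of a spoke have no other neighbour, so `b` and `y` would both be the root
    obtain rfl | ⟨j, rfl⟩ := twoHTree_adj_spoke_iff.1 hbx.symm
    · obtain rfl | ⟨l, rfl⟩ := twoHTree_adj_spoke_iff.1 hxy
      · exact absurd rfl hby
      · exact absurd (twoHTree_adj_leaf_iff.1 hyz).symm hxz
    · exact absurd (twoHTree_adj_leaf_iff.1 hab.symm) hax
  · exact absurd ((twoHTree_adj_leaf_iff.1 hbx.symm).trans (twoHTree_adj_leaf_iff.1 hxy).symm) hby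

end TwoHTree

def leafColor (t j : ℕ) : ℕ := if j < t - 2 then j else j + 2

theorem leafColor_injective (t : ℕ) : Function.Injective (leafColor t) := fun a b h => by
  unfold leafColor at h; split_ifs at h <;> omega

theorem leafColor_ne {t j m : ℕ} (h₁ : t - 2 ≤ m) (h₂ : m < t) : leafColor t j ≠ m := by
  unfold leafColor; split_ifs <;> omega

theorem leafColor_le (t j : ℕ) : leafColor t j ≤ j + 2 := by
  unfold leafColor; split_ifs <;> omega

section TwoHTreeColoring

variable {t : ℕ} {n : Fin t → ℕ}

def twoHTreePairColor : TwoHTreeVertex t n → TwoHTreeVertex t n → ℕ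
  | none, some ⟨i, none⟩ | some ⟨i, none⟩, none => i
  | some ⟨_, none⟩, some ⟨_, some j⟩ | some ⟨_, some j⟩, some ⟨_, none⟩ => leafColor t j
  | _, _ => 0

def twoHTreeEdgeColor : Sym2 (TwoHTreeVertex t n) → ℕ :=
  Sym2.lift ⟨twoHTreePairColor, fun x y => by
    rcases x with _ | ⟨_, _ | _⟩ <;> rcases y with _ | ⟨_, _ | _⟩ <;> rfl⟩

theorem twoHTreeEdgeColor_lt {m : ℕ} (ht : t ≤ m) (hn : ∀ i, n i + 1 ≤ m)
    (e : Sym2 (TwoHTreeVertex t n)) : twoHTreeEdgeColor e < m + 1 := by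
  have hspoke (i : Fin t) : (i : ℕ) < m + 1 := by omega
  have hleaf (i : Fin t) (j : Fin (n i)) : leafColor t j < m + 1 :=
    (leafColor_le t j).trans_lt (by have := hn i; omega)
  induction e with | h x y => ?_
  rcases x with _ | ⟨i, _ | j⟩ <;> rcases y with _ | ⟨i', _ | j'⟩ <;>
    simp only [twoHTreeEdgeColor, Sym2.lift_mk, twoHTreePairColor] <;>
    first | exact m.succ_pos | apply hspoke | apply hleaf

variable (h0 : ∀ i : Fin t, (i : ℕ) < t - 2 → n i = 0)
include h0

theorem sub_two_le_of_leaf {i : Fin t} (j : Fin (n i)) : t - 2 ≤ (i : ℕ) := by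
  by_contra h
  exact (h0 i (by omega) ▸ j).elim0

theorem twoHTreeEdgeColor_ne_of_adj {u v w : TwoHTreeVertex t n}
    (huv : (twoHTree t n).Adj u v) (huw : (twoHTree t n).Adj u w) (hvw : v ≠ w) :
    twoHTreeEdgeColor s(u, v) ≠ twoHTreeEdgeColor s(u, w) := by
  rcases u with _ | ⟨i, _ | j⟩
  · obtain ⟨i, rfl⟩ := twoHTree_adj_none_iff.1 huv
    obtain ⟨k, rfl⟩ := twoHTree_adj_none_iff.1 huw
    simp only [twoHTreeEdgeColor, Sym2.lift_mk, twoHTreePairColor]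
    exact fun h => hvw (by rw [Fin.val_injective h])
  · have hleaf (j : Fin (n i)) : leafColor t j ≠ i := leafColor_ne (sub_two_le_of_leaf h0 j) i.isLt
    obtain rfl | ⟨j, rfl⟩ := twoHTree_adj_spoke_iff.1 huv <;>
      obtain rfl | ⟨l, rfl⟩ := twoHTree_adj_spoke_iff.1 huw <;>
      simp only [twoHTreeEdgeColor, Sym2.lift_mk, twoHTreePairColor]
    · exact absurd rfl hvw
    · exact (hleaf l).symm
    · exact hleaf j
    · exact fun h => hvw (by rw [Fin.val_injective (leafColor_injective t h)])
  · exact absurd ((twoHTree_adj_leaf_iff.1 huv).trans (twoHTree_adj_leaf_iff.1 huw).symm) hvw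

theorem twoHTreeEdgeColor_not_bicolored {a b x y z : TwoHTreeVertex t n}
    (hab : (twoHTree t n).Adj a b) (hbx : (twoHTree t n).Adj b x) (hxy : (twoHTree t n).Adj x y)
    (hyz : (twoHTree t n).Adj y z) (hax : a ≠ x) (hby : b ≠ y) (hxz : x ≠ z) :
    twoHTreeEdgeColor s(a, b) ≠ twoHTreeEdgeColor s(x, y) := by
  obtain ⟨i, k, j, l, rfl, rfl, rfl, rfl, rfl⟩ := twoHTree_path_four hab hbx hxy hyz hax hby hxz
  exact leafColor_ne (sub_two_le_of_leaf h0 l) k.isLt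

theorem exists_isStarEdgeColoring_twoHTree {m : ℕ} (ht : t ≤ m) (hn : ∀ i, n i + 1 ≤ m) :
    ∃ c : Sym2 (TwoHTreeVertex t n) → Fin (m + 1),
      IsStarEdgeColoring (twoHTree t n) c := by
  refine ⟨fun e => ⟨twoHTreeEdgeColor e, twoHTreeEdgeColor_lt ht hn e⟩, ?_, ?_⟩
  · intro u v w huv huw hvw
    simpa [Fin.ext_iff] using twoHTreeEdgeColor_ne_of_adj h0 huv huw hvw
  · intro a b x y z hab hbx hxy hyz hax _ hby _ hxz
    simpa [Fin.ext_iff] using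
      fun h _ => twoHTreeEdgeColor_not_bicolored h0 hab hbx hxy hyz hax hby hxz h

end TwoHTreeColoring

section TwoHTreeLowerBound

variable {t : ℕ} {n : Fin t → ℕ} {k : ℕ} {c : Sym2 (TwoHTreeVertex t n) → Fin k}

theorem IsStarEdgeColoring.le_of_twoHTree (hc : IsStarEdgeColoring (twoHTree t n) c) : t ≤ k := by
  simpa using hc.card_le_of_injective none (f := fun i : Fin t => some ⟨i, none⟩)
    (fun _ _ h => (Sigma.mk.inj (Option.some.inj h)).1) (fun i => twoHTree_adj_none_iff.2 ⟨i, rfl⟩)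

theorem IsStarEdgeColoring.succ_le_of_twoHTree (hc : IsStarEdgeColoring (twoHTree t n) c)
    (i : Fin t) : n i + 1 ≤ k := by
  simpa using hc.card_le_of_injective (some ⟨i, none⟩)
    (f := fun o : Option (Fin (n i)) => o.elim none fun j => some ⟨i, some j⟩)
    (fun o o' h => by rcases o with _ | j <;> rcases o' with _ | j' <;> simp_all)
    (fun o => by rcases o with _ | j <;> simp)

end TwoHTreeLowerBound

/-- Theorem 6.5, bounds. Let `T = T_{n₁,…,n_t}` be a 2H-tree with
`t ≥ 2` and `n₁ = ⋯ = n_{t-2} = 0`, and let `Δ = max (t, n_t + 1)` be its maximum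
degree. Then `Δ ≤ χ'_s(T) ≤ Δ + 1`. -/
theorem twoHTree_two_big_branches_bounds (t : ℕ) (ht : 2 ≤ t) (n : Fin t → ℕ)
    (hn : Monotone n) (h0 : ∀ i : Fin t, (i : ℕ) < t - 2 → n i = 0) :
    max t (n ⟨t - 1, by omega⟩ + 1) ≤ starChromaticIndex (twoHTree t n) ∧
      starChromaticIndex (twoHTree t n) ≤ max t (n ⟨t - 1, by omega⟩ + 1) + 1 := by
  have hlast (i : Fin t) : n i + 1 ≤ max t (n ⟨t - 1, by omega⟩ + 1) :=
    le_max_of_le_right (Nat.succ_le_succ (hn (Fin.le_iff_val_le_val.2 (by dsimp; omega))))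
  obtain ⟨c, hc⟩ := exists_isStarEdgeColoring_twoHTree h0 (le_max_left _ _) hlast
  obtain ⟨c', hc'⟩ := hc.exists_starChromaticIndex
  exact ⟨max_le hc'.le_of_twoHTree (hc'.succ_le_of_twoHTree _), hc.starChromaticIndex_le⟩
end
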